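/- arXiv:0812.2202 — 2 statements merged into one kernel-verified Lean document; each statement's English description precedes it below -/
import Mathlib

section
/- Let y ∈ ℝ^N and let J be the set of its s largest-magnitude coordinates. Among all subsets J₀ ⊆ J whose coordinates are comparable (|y(i)| ≤ 2|y(j)| for all i, j ∈ J₀), there exists one with energy ‖y|_{J₀}‖₂² ≥ ‖y|_J‖₂² / (2.5 ⌈log₂ s⌉ + 1), provided s ≥ 2. (I.e., partitioning J into dyadic magnitude bands, one band captures at least a 1/O(log s) fraction of the energy.) -/
open Finset

/-- The ℓ₂ norm on ℝ^N. -/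
noncomputable def l2 {N : ℕ} (v : Fin N → ℝ) : ℝ := Real.sqrt (∑ i, v i ^ 2)

/-- The ℓ₁ norm on ℝ^N. -/
def l1 {N : ℕ} (v : Fin N → ℝ) : ℝ := ∑ i, |v i|

/-- A vector is `s`-sparse if it has at most `s` nonzero coordinates. -/
def Sparse {N : ℕ} (s : ℕ) (v : Fin N → ℝ) : Prop :=
  (Finset.univ.filter fun j => v j ≠ 0).card ≤ s

/-- Restricted isometry condition with parameters (n, δ). -/
def RIC {m N : ℕ} (Φ : Matrix (Fin m) (Fin N) ℝ) (n : ℕ) (δ : ℝ) : Prop :=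
  ∀ v : Fin N → ℝ, Sparse n v →
    (1 - δ) * l2 v ≤ l2 (Φ.mulVec v) ∧ l2 (Φ.mulVec v) ≤ (1 + δ) * l2 v

/-- Squared-form restricted isometry condition with parameters (n, δ). -/
def RICsq {m N : ℕ} (Φ : Matrix (Fin m) (Fin N) ℝ) (n : ℕ) (δ : ℝ) : Prop :=
  ∀ v : Fin N → ℝ, Sparse n v →
    (1 - δ) * (l2 v) ^ 2 ≤ (l2 (Φ.mulVec v)) ^ 2 ∧
    (l2 (Φ.mulVec v)) ^ 2 ≤ (1 + δ) * (l2 v) ^ 2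

/-- `xs` is the vector keeping the `s` largest-magnitude coordinates of `x`
(other coordinates set to 0). -/
def IsLargest {N : ℕ} (s : ℕ) (x xs : Fin N → ℝ) : Prop :=
  ∃ T : Finset (Fin N), T.card = min s N ∧
    (∀ i, xs i = if i ∈ T then x i else 0) ∧
    ∀ i ∈ T, ∀ j ∉ T, |x j| ≤ |x i|

/-!
Let `M = max_{i ∈ J} |y i|` and cut `J` into the dyadic bands `M / 2^(k+1) < |y i| ≤ M / 2^k`,
`k < K`, where `2^K ≥ s`; each band has comparable coordinates. The band containing the
maximiser has energy at least `M²`, while the coordinates below `M / 2^K` are at most `s` in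
number and so carry energy at most `s M² / 4^K ≤ M² / 2`. Hence the heaviest band `E` satisfies
`‖y|_J‖² ≤ K E + E / 2`.
-/

noncomputable section DyadicBands

variable {ι : Type*} (J : Finset ι) (y : ι → ℝ) (M : ℝ)

def dyadicBand (k : ℕ) : Finset ι :=
  J.filter fun i => M / 2 ^ (k + 1) < |y i| ∧ |y i| ≤ M / 2 ^ k

def dyadicTail (k : ℕ) : Finset ι :=
  J.filter fun i => |y i| ≤ M / 2 ^ k

variable {J y M}

theorem abs_le_two_mul_abs_of_mem_dyadicBand {k : ℕ} {i j : ι}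
    (hi : i ∈ dyadicBand J y M k) (hj : j ∈ dyadicBand J y M k) : |y i| ≤ 2 * |y j| := by
  simp only [dyadicBand, mem_filter] at hi hj
  have hhalf : M / 2 ^ k = 2 * (M / 2 ^ (k + 1)) := by rw [pow_succ]; field_simp
  linarith [hi.2.2, hj.2.1]

theorem dyadicTail_zero (hM : ∀ i ∈ J, |y i| ≤ M) : dyadicTail J y M 0 = J :=
  filter_true_of_mem fun i hi => by simpa using hM i hi

theorem sum_dyadicTail_eq {β : Type*} [AddCommMonoid β] (f : ι → β) (hM : 0 ≤ M) (k : ℕ) :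
    ∑ i ∈ dyadicTail J y M k, f i =
      ∑ i ∈ dyadicBand J y M k, f i + ∑ i ∈ dyadicTail J y M (k + 1), f i := by
  have hmono : M / 2 ^ (k + 1) ≤ M / 2 ^ k :=
    div_le_div_of_nonneg_left hM (by positivity) (pow_le_pow_right₀ one_le_two k.le_succ)
  rw [← sum_filter_not_add_sum_filter (dyadicTail J y M k) fun i => |y i| ≤ M / 2 ^ (k + 1)]
  congr 2 <;> ext i <;> simp only [dyadicTail, dyadicBand, mem_filter, not_le]
  · tauto
  · exact ⟨fun h => ⟨h.1.1, h.2⟩, fun h => ⟨⟨h.1, h.2.trans hmono⟩, h.2⟩⟩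

theorem sum_eq_sum_dyadicBand_add_sum_dyadicTail {β : Type*} [AddCommMonoid β] (f : ι → β)
    (hM₀ : 0 ≤ M) (hM : ∀ i ∈ J, |y i| ≤ M) (K : ℕ) :
    ∑ i ∈ J, f i =
      ∑ k ∈ range K, ∑ i ∈ dyadicBand J y M k, f i + ∑ i ∈ dyadicTail J y M K, f i := by
  induction K with
  | zero => simp [dyadicTail_zero hM]
  | succ K ih => rw [ih, sum_dyadicTail_eq f hM₀, sum_range_succ, add_assoc]

theorem sum_sq_dyadicTail_le (K : ℕ) :
    ∑ i ∈ dyadicTail J y M K, y i ^ 2 ≤ #J * (M / 2 ^ K) ^ 2 := by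
  calc ∑ i ∈ dyadicTail J y M K, y i ^ 2
      ≤ #(dyadicTail J y M K) • (M / 2 ^ K) ^ 2 :=
        sum_le_card_nsmul _ _ _ fun i hi => by
          rw [← sq_abs]
          exact pow_le_pow_left₀ (abs_nonneg _) (mem_filter.mp hi).2 2
    _ ≤ #J * (M / 2 ^ K) ^ 2 := by
        rw [nsmul_eq_mul]
        gcongr
        exact filter_subset _ _

theorem exists_comparable_subset_sum_sq_ge {K : ℕ} (hK : 1 ≤ K) (hJ : #J ≤ 2 ^ K) :
    ∃ J₀ ⊆ J, (∀ i ∈ J₀, ∀ j ∈ J₀, |y i| ≤ 2 * |y j|) ∧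
      ∑ i ∈ J, y i ^ 2 ≤ (K + 1 / 2) * ∑ i ∈ J₀, y i ^ 2 := by
  rcases J.eq_empty_or_nonempty with rfl | hne
  · exact ⟨∅, subset_refl _, by simp, by simp⟩
  obtain ⟨i₀, hi₀, hmax⟩ := J.exists_max_image (fun i => |y i|) hne
  generalize hM : |y i₀| = M at hmax
  have hM₀ : 0 ≤ M := hM ▸ abs_nonneg _
  obtain ⟨k₀, hk₀, hk₀max⟩ := (range K).exists_max_image
    (fun k => ∑ i ∈ dyadicBand J y M k, y i ^ 2) ⟨0, mem_range.mpr hK⟩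
  set E := ∑ i ∈ dyadicBand J y M k₀, y i ^ 2
  refine ⟨dyadicBand J y M k₀, filter_subset _ _,
    fun i hi j hj => abs_le_two_mul_abs_of_mem_dyadicBand hi hj, ?_⟩
  have hbands : ∑ k ∈ range K, ∑ i ∈ dyadicBand J y M k, y i ^ 2 ≤ K * E := by
    simpa using sum_le_card_nsmul _ _ _ hk₀max
  have hME : M ^ 2 ≤ E := by
    refine le_trans ?_ (hk₀max 0 (mem_range.mpr hK))
    rcases hM₀.eq_or_lt with hzero | hpos
    · rw [← hzero, zero_pow two_ne_zero]
      exact sum_nonneg fun i _ => sq_nonneg _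
    · have hi₀band : i₀ ∈ dyadicBand J y M 0 :=
        mem_filter.mpr ⟨hi₀, by rw [hM]; linarith, by rw [hM]; norm_num⟩
      simpa [← hM] using single_le_sum (fun i _ => sq_nonneg (y i)) hi₀band
  have htail : ∑ i ∈ dyadicTail J y M K, y i ^ 2 ≤ E / 2 := by
    have h2K : (2 : ℝ) ≤ 2 ^ K := by simpa using pow_le_pow_right₀ one_le_two hK
    have hJ' : (#J : ℝ) ≤ 2 ^ K := by exact_mod_cast hJ
    calc ∑ i ∈ dyadicTail J y M K, y i ^ 2 ≤ #J * (M / 2 ^ K) ^ 2 := sum_sq_dyadicTail_le K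
      _ ≤ 2 ^ K * (M / 2 ^ K) ^ 2 := by gcongr
      _ = M ^ 2 / 2 ^ K := by field_simp
      _ ≤ M ^ 2 / 2 := by gcongr
      _ ≤ E / 2 := by gcongr
  rw [sum_eq_sum_dyadicBand_add_sum_dyadicTail _ hM₀ hmax K]
  linarith

end DyadicBands

theorem regularization_band_general {N s : ℕ} (y : Fin N → ℝ) (J : Finset (Fin N))
    (hs : 2 ≤ s) (hJcard : J.card = min s N) :
    ∃ J₀ ⊆ J, (∀ i ∈ J₀, ∀ j ∈ J₀, |y i| ≤ 2 * |y j|) ∧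
      (∑ i ∈ J, y i ^ 2) / (2.5 * (Nat.clog 2 s : ℝ) + 1) ≤ ∑ i ∈ J₀, y i ^ 2 := by
  have hK : 1 ≤ Nat.clog 2 s := Nat.clog_pos one_lt_two hs
  have hJ : #J ≤ 2 ^ Nat.clog 2 s :=
    hJcard ▸ (min_le_left s N).trans (Nat.le_pow_clog one_lt_two s)
  obtain ⟨J₀, hJ₀, hcomp, henergy⟩ := exists_comparable_subset_sum_sq_ge hK hJ
  refine ⟨J₀, hJ₀, hcomp, ?_⟩
  have hK' : (1 : ℝ) ≤ Nat.clog 2 s := by exact_mod_cast hK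
  have hE : 0 ≤ ∑ i ∈ J₀, y i ^ 2 := sum_nonneg fun i _ => sq_nonneg _
  rw [div_le_iff₀ (by positivity)]
  nlinarith

theorem regularization_band {N s : ℕ} (y : Fin N → ℝ) (J : Finset (Fin N))
    (hs : 2 ≤ s) (hJcard : J.card = min s N)
    (hJ : ∀ i ∈ J, ∀ j ∉ J, |y j| ≤ |y i|) :
    ∃ J₀ ⊆ J, (∀ i ∈ J₀, ∀ j ∈ J₀, |y i| ≤ 2 * |y j|) ∧
      (∑ i ∈ J, y i ^ 2) / (2.5 * (Nat.clog 2 s : ℝ) + 1) ≤ ∑ i ∈ J₀, y i ^ 2 :=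
  regularization_band_general y J hs hJcard
end

section
/- Let Φ satisfy the squared-form RIC with parameters (s + |supp(x)|, δ). Then for any vector x ∈ ℝ^N and any set T of size at most s disjoint from supp(x), the proxy y = Φ*Φx satisfies ‖y|_T‖₂ ≤ δ‖x‖₂. -/
/-! The restriction `u` of `Φᵀ Φ x` to `T` satisfies `‖u‖² = ⟨Φu, Φx⟩`, and `u ⟂ x`. By
polarization, the RIC bounds `⟨Φa, Φb⟩` for orthogonal vectors `a`, `b` with `a ± b` sparse by
`δ (‖a‖² + ‖b‖²) / 2`; rescaling `a` and `b` to equal norms turns this into `δ ‖a‖ ‖b‖`. Hence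
`‖u‖² ≤ δ ‖u‖ ‖x‖`. -/

open Finset

open Matrix

section Sparse

variable {N p q : ℕ} {a b : Fin N → ℝ}

theorem Sparse.smul (ha : Sparse p a) (c : ℝ) : Sparse p (c • a) :=
  (card_le_card fun i => by simp +contextual).trans ha

theorem Sparse.add (ha : Sparse p a) (hb : Sparse q b) : Sparse (p + q) (a + b) := by
  refine (card_le_card fun i hi => ?_).trans ((card_union_le _ _).trans (add_le_add ha hb))
  contrapose! hi
  simp_all

theorem Sparse.sub (ha : Sparse p a) (hb : Sparse q b) : Sparse (p + q) (a - b) := by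
  simpa [sub_eq_add_neg] using ha.add (hb.smul (-1))

theorem sparse_card_of_forall_notMem_eq_zero (T : Finset (Fin N)) (h : ∀ i ∉ T, a i = 0) :
    Sparse T.card a :=
  card_le_card fun i hi => by
    by_contra hiT
    simp_all

end Sparse

section l2

variable {N : ℕ}

theorem l2_nonneg (v : Fin N → ℝ) : 0 ≤ l2 v :=
  Real.sqrt_nonneg _

theorem l2_sq (v : Fin N → ℝ) : l2 v ^ 2 = v ⬝ᵥ v := by
  rw [l2, Real.sq_sqrt (by positivity), dotProduct]
  simp only [sq]

theorem l2_eq_zero {v : Fin N → ℝ} : l2 v = 0 ↔ v = 0 := by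
  rw [← sq_eq_zero_iff, l2_sq, dotProduct_self_eq_zero]

@[simp]
theorem l2_zero : l2 (0 : Fin N → ℝ) = 0 :=
  l2_eq_zero.2 rfl

end l2

namespace RICsq

variable {m N n p q : ℕ} {Φ : Matrix (Fin m) (Fin N) ℝ} {δ : ℝ} {a b : Fin N → ℝ}

theorem nonneg (h : RICsq Φ n δ) (ha : Sparse n a) (ha0 : a ≠ 0) : 0 ≤ δ := by
  have hpos : 0 < l2 a ^ 2 := by positivity [(l2_nonneg a).lt_of_ne' (mt l2_eq_zero.1 ha0)]
  obtain ⟨hlow, hupp⟩ := h a ha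
  nlinarith

theorem dotProduct_mulVec_le (h : RICsq Φ n δ) (hadd : Sparse n (a + b)) (hsub : Sparse n (a - b)) :
    Φ *ᵥ a ⬝ᵥ Φ *ᵥ b ≤ a ⬝ᵥ b + δ / 2 * (a ⬝ᵥ a + b ⬝ᵥ b) := by
  have hupp := (h _ hadd).2
  have hlow := (h _ hsub).1
  simp only [l2_sq, mulVec_add, mulVec_sub, add_dotProduct, dotProduct_add, sub_dotProduct,
    dotProduct_sub, dotProduct_comm b a, dotProduct_comm (Φ *ᵥ b)] at hupp hlow
  linarith

theorem dotProduct_mulVec_le_of_dotProduct_eq_zero (h : RICsq Φ (p + q) δ) (ha : Sparse p a)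
    (hb : Sparse q b) (hab : a ⬝ᵥ b = 0) : Φ *ᵥ a ⬝ᵥ Φ *ᵥ b ≤ δ * l2 a * l2 b := by
  rcases (l2_nonneg a).eq_or_lt with hα | hα
  · simp [l2_eq_zero.1 hα.symm]
  rcases (l2_nonneg b).eq_or_lt with hβ | hβ
  · simp [l2_eq_zero.1 hβ.symm]
  set α := l2 a
  set β := l2 b
  -- scaling to `β • a` and `α • b`, of equal norm `α β`, makes the polarization bound sharp
  have key := h.dotProduct_mulVec_le ((ha.smul β).add (hb.smul α)) ((ha.smul β).sub (hb.smul α))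
  simp only [mulVec_smul, smul_dotProduct, dotProduct_smul, smul_eq_mul, hab, ← l2_sq] at key
  have : (α * β) * (Φ *ᵥ a ⬝ᵥ Φ *ᵥ b) ≤ (α * β) * (δ * α * β) := by linarith
  exact le_of_mul_le_mul_left this (by positivity)

end RICsq

theorem proxy_off_support {m N s : ℕ} (Φ : Matrix (Fin m) (Fin N) ℝ) (δ : ℝ)
    (x : Fin N → ℝ)
    (h : RICsq Φ (s + (Finset.univ.filter fun j => x j ≠ 0).card) δ)
    (T : Finset (Fin N)) (hT : T.card ≤ s) (hdisj : ∀ i ∈ T, x i = 0) :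
    l2 (fun i => if i ∈ T then (Φ.transpose.mulVec (Φ.mulVec x)) i else 0) ≤
      δ * l2 x := by
  set u : Fin N → ℝ := fun i => if i ∈ T then (Φᵀ *ᵥ (Φ *ᵥ x)) i else 0
  have hu_sparse : Sparse s u :=
    (sparse_card_of_forall_notMem_eq_zero T fun i hi => if_neg hi).trans hT
  have hux : u ⬝ᵥ x = 0 :=
    sum_eq_zero fun i _ => by by_cases hi : i ∈ T <;> simp [u, hi, hdisj]
  have hu_sq : l2 u ^ 2 = Φ *ᵥ u ⬝ᵥ Φ *ᵥ x := by
    rw [← vecMul_transpose Φ u, ← dotProduct_mulVec, l2_sq]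
    exact sum_congr rfl fun i _ => by by_cases hi : i ∈ T <;> simp [u, hi]
  have key := h.dotProduct_mulVec_le_of_dotProduct_eq_zero hu_sparse le_rfl hux
  rw [← hu_sq] at key
  rcases eq_or_ne x 0 with rfl | hx
  · simp only [l2_zero, mul_zero] at key ⊢
    nlinarith [l2_nonneg u]
  · have hδx : 0 ≤ δ * l2 x := mul_nonneg (h.nonneg (Nat.le_add_left _ _) hx) (l2_nonneg x)
    nlinarith [l2_nonneg u]
end
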